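/- Transducer Hadamard test. Let H and L be finite-dimensional complex inner product spaces, let φ₀, φ₁ ∈ H be orthonormal vectors, let γ, δ ∈ ℂ, and set ψ = γφ₁ + δφ₀. Let V be a unitary on H ⊕ L and w ∈ L be such that V(ψ ⊕ w) = (γφ₁ − δφ₀) ⊕ w. Let cV := I ⊗ |0⟩⟨0| + V ⊗ |1⟩⟨1| on (H ⊕ L) ⊗ ℂ², let Had be the Hadamard gate on ℂ², and define V' := (I ⊗ Had) ∘ cV ∘ (I ⊗ Had). Then V'( ψ ⊗ |0⟩ + (1/√2) w ⊗ |−⟩ ) = γ φ₁ ⊗ |0⟩ + δ φ₀ ⊗ |1⟩ + (1/√2) w ⊗ |−⟩, where |−⟩ = (|0⟩ − |1⟩)/√2. In particular the marking map ψ ⊗ |0⟩ ↦ γφ₁ ⊗ |0⟩ + δφ₀ ⊗ |1⟩ is transduced with catalyst of squared norm ‖w‖²/2. -/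

import Mathlib

open scoped InnerProductSpace

/-!
Conjugating the controlled unitary by Hadamards sends `a ⊗ |0⟩ + b ⊗ |1⟩` to
`½(a + b + V(a − b)) ⊗ |0⟩ + ½(a + b − V(a − b)) ⊗ |1⟩`. With `a ± b` equal to `ψ ⊕ 0` and
`ψ ⊕ w`, the transduction hypothesis `V(ψ ⊕ w) = (γφ₁ − δφ₀) ⊕ w` makes the `γφ₁` part add up
in the `|0⟩` branch and the `δφ₀` part in the `|1⟩` branch, while the catalyst returns as
`½ w ⊗ |0⟩ − ½ w ⊗ |1⟩ = (1/√2) w ⊗ |−⟩`.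
-/

theorem hadamard_controlled_hadamard_apply {R E F : Type*} [CommRing R]
    [AddCommGroup E] [Module R E] [AddCommGroup F] [Module R F]
    (pair : E → E → F) (V : E →ₗ[R] E) (cV Had : F →ₗ[R] F) (s : R)
    (hcV : ∀ a b, cV (pair a b) = pair a (V b))
    (hHad : ∀ a b, Had (pair a b) = pair (s • (a + b)) (s • (a - b))) (a b : E) :
    Had (cV (Had (pair a b))) =
      pair ((s * s) • (a + b + V (a - b))) ((s * s) • (a + b - V (a - b))) := by
  rw [hHad, hcV, hHad, map_smul, ← smul_add, ← smul_sub, smul_smul, smul_smul]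

theorem stmt13 {H L : Type*}
    [NormedAddCommGroup H] [InnerProductSpace ℂ H]
    [NormedAddCommGroup L] [InnerProductSpace ℂ L]
    (φ₀ φ₁ : H)
    (γ δ : ℂ) (ψ : H) (hψ : ψ = γ • φ₁ + δ • φ₀)
    (emb : H → L → WithLp 2 (H × L))
    (hemb : ∀ x y, emb x y = (WithLp.equiv 2 (H × L)).symm (x, y))
    (V : WithLp 2 (H × L) ≃ₗᵢ[ℂ] WithLp 2 (H × L))
    (w : L) (hV : V (emb ψ w) = emb (γ • φ₁ - δ • φ₀) w)
    (pair : WithLp 2 (H × L) → WithLp 2 (H × L) →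
      WithLp 2 (WithLp 2 (H × L) × WithLp 2 (H × L)))
    (hpair : ∀ a b, pair a b =
      (WithLp.equiv 2 (WithLp 2 (H × L) × WithLp 2 (H × L))).symm (a, b))
    (cV Had V' :
      WithLp 2 (WithLp 2 (H × L) × WithLp 2 (H × L)) →ₗ[ℂ]
        WithLp 2 (WithLp 2 (H × L) × WithLp 2 (H × L)))
    (hcV : ∀ a b, cV (pair a b) = pair a (V b))
    (hHad : ∀ a b, Had (pair a b) =
      pair (((Real.sqrt 2 : ℝ) : ℂ)⁻¹ • (a + b)) (((Real.sqrt 2 : ℝ) : ℂ)⁻¹ • (a - b)))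
    (hV' : V' = Had ∘ₗ cV ∘ₗ Had) :
    V' (pair (emb ψ ((1 / 2 : ℂ) • w)) (emb 0 (-(1 / 2 : ℂ) • w))) =
      pair (emb (γ • φ₁) ((1 / 2 : ℂ) • w)) (emb (δ • φ₀) (-(1 / 2 : ℂ) • w)) ∧
    ‖pair (emb 0 ((1 / 2 : ℂ) • w)) (emb 0 (-(1 / 2 : ℂ) • w))‖ ^ 2 = ‖w‖ ^ 2 / 2 := by
  have hs : ((Real.sqrt 2 : ℝ) : ℂ)⁻¹ * ((Real.sqrt 2 : ℝ) : ℂ)⁻¹ = 1 / 2 := by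
    rw [← mul_inv, ← Complex.ofReal_mul, Real.mul_self_sqrt zero_le_two]
    norm_num
  obtain rfl : emb = fun x y ↦ WithLp.toLp 2 (x, y) := funext₂ hemb
  obtain rfl : pair = fun a b ↦ WithLp.toLp 2 (a, b) := funext₂ hpair
  constructor
  · have hdiff : WithLp.toLp 2 (ψ, (1 / 2 : ℂ) • w) - WithLp.toLp 2 (0, -(1 / 2 : ℂ) • w) =
        WithLp.toLp 2 (ψ, w) := by
      rw [← WithLp.toLp_sub, Prod.mk_sub_mk]
      congr 2 <;> module
    rw [hV', LinearMap.comp_apply, LinearMap.comp_apply,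
      hadamard_controlled_hadamard_apply _ V.toLinearEquiv.toLinearMap cV Had _ hcV hHad, hs,
      LinearEquiv.coe_coe, LinearIsometryEquiv.coe_toLinearEquiv, hdiff, hV, hψ]
    simp only [← WithLp.toLp_add, ← WithLp.toLp_sub, ← WithLp.toLp_smul, Prod.mk_add_mk,
      Prod.mk_sub_mk, Prod.smul_mk, (WithLp.toLp_injective 2).eq_iff, Prod.mk.injEq]
    refine ⟨⟨?_, ?_⟩, ?_, ?_⟩ <;> module
  · rw [WithLp.prod_norm_sq_eq_of_L2, WithLp.toLp_fst, WithLp.toLp_snd, WithLp.norm_toLp_snd,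
      WithLp.norm_toLp_snd, norm_smul, norm_smul, norm_neg]
    norm_num
    ring
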